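/- Let ε_1,...,ε_n be independent Rademacher random variables (each ±1 with probability 1/2). Then E|Σ_{i=1}^n ε_i| ≥ √(n/2). -/

import Mathlib

/-!
Conditioning on the last sign, `∑ |S_{n+1}| = ∑ (|S_n + 1| + |S_n - 1|)`, and the triangle
inequality `2|x| ≤ |x + 1| + |x - 1|` gains an extra `2` exactly when `S_n = 0`. Hence
`E|S_{n+1}| ≥ E|S_n| + P(S_n = 0)`. For `n = 2m` that probability is at least
`C(2m, m) / 4^m ≥ 1 / (2√m) ≥ √(m + 1) - √m`, which carries the bound `E|S_{2m}| ≥ √m` over to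
`E|S_{2m+1}| ≥ √(m + 1)`, while the odd-to-even step only needs monotonicity.
-/

open Finset Real

noncomputable def rademacherSum {n : ℕ} (ε : Fin n → Bool) : ℝ :=
  ∑ i, if ε i then 1 else -1

theorem rademacherSum_eq_two_mul_card_sub {n : ℕ} (ε : Fin n → Bool) :
    rademacherSum ε = 2 * #{i | ε i} - n := by
  have h (i : Fin n) : (if ε i then (1 : ℝ) else -1) = 2 * (if ε i then 1 else 0) - 1 := by
    split <;> ring
  simp only [rademacherSum, h, sum_sub_distrib, ← mul_sum, sum_boole, sum_const, card_univ,
    Fintype.card_fin, nsmul_eq_mul, mul_one]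

theorem sum_comp_rademacherSum_succ (f : ℝ → ℝ) (n : ℕ) :
    ∑ ε : Fin (n + 1) → Bool, f (rademacherSum ε) =
      ∑ ε : Fin n → Bool, (f (rademacherSum ε + 1) + f (rademacherSum ε - 1)) := by
  rw [← (Fin.consEquiv fun _ => Bool).sum_comp, Fintype.sum_prod_type, Fintype.sum_bool,
    ← sum_add_distrib]
  simp [rademacherSum, Fin.sum_univ_succ, Fin.consEquiv, add_comm, sub_eq_add_neg]

theorem two_mul_abs_add_ite_le (x : ℝ) :
    2 * |x| + (if x = 0 then 2 else 0) ≤ |x + 1| + |x - 1| := by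
  split_ifs with hx
  · norm_num [hx]
  · calc 2 * |x| + 0 = |(x + 1) + (x - 1)| := by rw [add_zero, ← abs_two, ← abs_mul]; ring_nf
      _ ≤ |x + 1| + |x - 1| := abs_add_le _ _

theorem two_mul_sum_abs_add_card_le_sum_abs_succ (n : ℕ) :
    2 * ∑ ε : Fin n → Bool, |rademacherSum ε| + 2 * #{ε : Fin n → Bool | rademacherSum ε = 0}
      ≤ ∑ ε : Fin (n + 1) → Bool, |rademacherSum ε| := by
  rw [sum_comp_rademacherSum_succ, ← sum_boole, mul_sum, mul_sum, ← sum_add_distrib]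
  refine sum_le_sum fun ε _ => ?_
  refine le_of_eq_of_le ?_ (two_mul_abs_add_ite_le (rademacherSum ε))
  split_ifs <;> norm_num

theorem centralBinom_le_card_rademacherSum_eq_zero (m : ℕ) :
    m.centralBinom ≤ #{ε : Fin (2 * m) → Bool | rademacherSum ε = 0} := by
  have hcard : #(powersetCard m (univ : Finset (Fin (2 * m)))) = m.centralBinom := by
    simp [Nat.centralBinom_eq_two_mul_choose]
  rw [← hcard]
  refine card_le_card_of_injOn (fun s i => decide (i ∈ s)) (fun s hs => ?_) (fun s _ t _ h => ?_)
  · simp_all [rademacherSum_eq_two_mul_card_sub]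
  · ext i; simpa using congrFun h i

theorem sixteen_pow_le_four_mul_mul_centralBinom_sq {m : ℕ} (hm : 0 < m) :
    16 ^ m ≤ 4 * m * m.centralBinom ^ 2 := by
  induction m, hm using Nat.le_induction with
  | base => simp [Nat.centralBinom]
  | succ k hk ih =>
    refine Nat.le_of_mul_le_mul_right (c := k + 1) ?_ k.succ_pos
    calc 16 ^ (k + 1) * (k + 1) ≤ 16 * (4 * k * k.centralBinom ^ 2) * (k + 1) := by
          rw [pow_succ']; gcongr
      _ = 16 * (4 * k * (k + 1)) * k.centralBinom ^ 2 := by ring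
      _ ≤ 16 * (2 * k + 1) ^ 2 * k.centralBinom ^ 2 := by gcongr; nlinarith
      _ = 4 * ((k + 1) * (k + 1).centralBinom) ^ 2 := by
          rw [Nat.succ_mul_centralBinom_succ]; ring
      _ = 4 * (k + 1) * (k + 1).centralBinom ^ 2 * (k + 1) := by ring

theorem four_pow_mul_sqrt_succ_le (m : ℕ) :
    4 ^ m * √(m + 1) ≤ 4 ^ m * √m + m.centralBinom := by
  rcases Nat.eq_zero_or_pos m with rfl | hm
  · simp
  have hsq : √(m : ℝ) ^ 2 = m := sq_sqrt m.cast_nonneg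
  have hsq' : √((m : ℝ) + 1) ^ 2 = m + 1 := sq_sqrt (by positivity)
  have key : (4 : ℝ) ^ m ≤ 2 * √m * m.centralBinom := by
    refine le_of_pow_le_pow_left₀ two_ne_zero (by positivity) ?_
    calc ((4 : ℝ) ^ m) ^ 2 = (16 ^ m : ℕ) := by push_cast; rw [← pow_mul, mul_comm, pow_mul]; norm_num
      _ ≤ (4 * m * m.centralBinom ^ 2 : ℕ) := by
          exact_mod_cast sixteen_pow_le_four_mul_mul_centralBinom_sq hm
      _ = (2 * √m * m.centralBinom) ^ 2 := by push_cast; rw [mul_pow, mul_pow, hsq]; ring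
  refine le_of_pow_le_pow_left₀ two_ne_zero (by positivity) ?_
  calc (4 ^ m * √(m + 1)) ^ 2 = (4 ^ m * √m) ^ 2 + 4 ^ m * 4 ^ m := by
        rw [mul_pow, mul_pow, hsq, hsq']; ring
    _ ≤ (4 ^ m * √m) ^ 2 + 4 ^ m * (2 * √m * m.centralBinom) := by gcongr
    _ ≤ (4 ^ m * √m + m.centralBinom) ^ 2 := by nlinarith [sq_nonneg (m.centralBinom : ℝ)]

theorem two_mul_four_pow_mul_sqrt_succ_le_sum_abs {m : ℕ}
    (h : 4 ^ m * √m ≤ ∑ ε : Fin (2 * m) → Bool, |rademacherSum ε|) :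
    2 * 4 ^ m * √(m + 1) ≤ ∑ ε : Fin (2 * m + 1) → Bool, |rademacherSum ε| :=
  calc 2 * 4 ^ m * √(m + 1) ≤ 2 * (4 ^ m * √m + m.centralBinom) := by
        rw [mul_assoc]; gcongr; exact four_pow_mul_sqrt_succ_le m
    _ ≤ 2 * ∑ ε : Fin (2 * m) → Bool, |rademacherSum ε|
          + 2 * #{ε : Fin (2 * m) → Bool | rademacherSum ε = 0} := by
        rw [mul_add]; gcongr; exact_mod_cast centralBinom_le_card_rademacherSum_eq_zero m
    _ ≤ _ := two_mul_sum_abs_add_card_le_sum_abs_succ _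

theorem four_pow_mul_sqrt_le_sum_abs (m : ℕ) :
    4 ^ m * √m ≤ ∑ ε : Fin (2 * m) → Bool, |rademacherSum ε| := by
  induction m with
  | zero => simp
  | succ m ih =>
    calc (4 : ℝ) ^ (m + 1) * √(m + 1 : ℕ) = 2 * (2 * 4 ^ m * √(m + 1)) := by push_cast; ring
      _ ≤ 2 * ∑ ε : Fin (2 * m + 1) → Bool, |rademacherSum ε| := by
          gcongr; exact two_mul_four_pow_mul_sqrt_succ_le_sum_abs ih
      _ ≤ ∑ ε : Fin (2 * m + 1 + 1) → Bool, |rademacherSum ε| :=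
          le_of_add_le_of_nonneg_left (two_mul_sum_abs_add_card_le_sum_abs_succ _) (by positivity)

theorem stmt_9 (n : ℕ) :
    Real.sqrt (n / 2) ≤
      (∑ ε : Fin n → Bool, |∑ i, (if ε i then (1 : ℝ) else -1)|) / 2 ^ n := by
  change √(n / 2) ≤ (∑ ε : Fin n → Bool, |rademacherSum ε|) / 2 ^ n
  rw [le_div_iff₀ (by positivity)]
  obtain ⟨m, rfl | rfl⟩ := Nat.even_or_odd' n
  · calc √((2 * m : ℕ) / 2) * 2 ^ (2 * m) = 4 ^ m * √m := by
          rw [pow_mul]; push_cast; norm_num [mul_comm]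
      _ ≤ _ := four_pow_mul_sqrt_le_sum_abs m
  · calc √((2 * m + 1 : ℕ) / 2) * 2 ^ (2 * m + 1) = 2 * 4 ^ m * √((2 * m + 1) / 2) := by
          rw [pow_succ, pow_mul]; push_cast; norm_num; ring
      _ ≤ 2 * 4 ^ m * √(m + 1) := by gcongr; linarith
      _ ≤ _ := two_mul_four_pow_mul_sqrt_succ_le_sum_abs (four_pow_mul_sqrt_le_sum_abs m)
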